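/- Let (G, μ, ω) be an infinite, connected, locally finite weighted graph, and d an intrinsic pseudo metric with finite jump size s which is also 1-intrinsic with bound C₀ (Σ_y ω(x,y)d(x,y) ≤ C₀μ(x)), with all balls finite. Let V(x) ≥ c₀[d(x,x₀)+k]^(-α) for some c₀ > 0, k > s, 0 < α ≤ 1. Let u solve Δu = Vu on G with Σ_x |u(x)|^p[d(x,x₀)+k]^(-β)μ(x) < ∞ for some β > 0 and p ≥ 1 satisfying p > (C₀/c₀) (k^(β+1)/(k-s)^(β+1)) β. Then u ≡ 0 on G. -/

import Mathlib

/-!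
By Kato's inequality `v = |u|` is a nonnegative subsolution, `μ V v ≤ ∑ ω (v y - v x)`. Test this
against `v ^ (p - 1) * r ^ (-β) * η_R`, where `r = d(·, x₀) + max k 1` and `η_R = (1 - r / R)₊`.
Green's formula and the pointwise inequality
`p (a - b) (b ^ (p - 1) t - a ^ (p - 1) s) ≤ |s - t| (a ^ p + b ^ p)` bound the left side by
`(1 / p) ∑ v ^ p ∑ ω |∇(r ^ (-β) η_R)|`. Along an edge that gradient is at most
`(β (r - s) ^ (-(β + 1)) + r ^ (-β) / R) d(x, y)`, and 1-intrinsicness turns `∑ ω d` into `C₀ μ`.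
As `r ≥ max k 1` and `α ≤ 1`, `(r - s) ^ (-(β + 1)) ≤ (k / (k - s)) ^ (β + 1) r ^ (-(α + β))`, so
with `W = ∑ v ^ p r ^ (-(α + β)) μ` this yields `c₀ ∑ v ^ p r ^ (-(α + β)) η_R μ ≤ θ W + O(1 / R)`,
where `θ = β C₀ (k / (k - s)) ^ (β + 1) / p < c₀` is exactly the hypothesis on `p`.
Letting `R → ∞` gives `c₀ W ≤ θ W`, so `W = 0`.
-/

open Finset Filter Topology

noncomputable def graphLap {G : Type*} (μ : G → ℝ) (ω : G → G → ℝ) (f : G → ℝ) (x : G) : ℝ :=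
  (μ x)⁻¹ * ∑' y, ω x y * (f y - f x)

theorem rpow_sub_one_mul_self {x p : ℝ} (hx : 0 ≤ x) (hp : 1 ≤ p) : x ^ (p - 1) * x = x ^ p := by
  rcases hx.eq_or_lt with rfl | hx
  · rw [mul_zero, Real.zero_rpow (by linarith)]
  · rw [Real.rpow_sub_one hx.ne', div_mul_cancel₀ _ hx.ne']

theorem mul_sub_mul_rpow_sub_one_le {a b p : ℝ} (hb : 0 ≤ b) (hab : b ≤ a) (hp : 1 ≤ p) :
    p * (a - b) * b ^ (p - 1) ≤ a ^ p - b ^ p := by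
  rcases hb.eq_or_lt with rfl | hb
  · rcases hp.eq_or_lt with rfl | hp
    · simp
    · rw [Real.zero_rpow (by linarith), Real.zero_rpow (by linarith), mul_zero, sub_zero]
      exact Real.rpow_nonneg (by linarith) p
  · have bernoulli := one_add_mul_self_le_rpow_one_add (s := a / b - 1)
      (by linarith [div_nonneg (hb.le.trans hab) hb.le]) hp
    rw [add_sub_cancel, Real.div_rpow (hb.le.trans hab) hb.le, le_div_iff₀ (by positivity)]
      at bernoulli
    have : (1 + p * (a / b - 1)) * b ^ p = b ^ p + p * (a - b) * b ^ (p - 1) := by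
      rw [← rpow_sub_one_mul_self hb.le hp]; field_simp
    linarith

/-- With `φ = v ^ (p - 1) * ψ`, `a = v y`, `b = v x`, `s = ψ y`, `t = ψ x`, this bounds
`-(v y - v x) (φ y - φ x)` by the variation of `ψ` alone. -/
theorem mul_sub_mul_rpow_sub_le {a b s t p : ℝ} (ha : 0 ≤ a) (hb : 0 ≤ b) (hs : 0 ≤ s)
    (ht : 0 ≤ t) (hp : 1 ≤ p) :
    p * ((a - b) * (b ^ (p - 1) * t - a ^ (p - 1) * s)) ≤ |s - t| * (a ^ p + b ^ p) := by
  wlog hab : b ≤ a generalizing a b s t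
  · have := this hb ha ht hs (le_of_not_ge hab)
    rw [abs_sub_comm, add_comm] at this
    linarith
  have hmono : 0 ≤ p * (s * ((a - b) * (a ^ (p - 1) - b ^ (p - 1)))) :=
    mul_nonneg (by linarith) <| mul_nonneg hs <| mul_nonneg (by linarith) <|
      sub_nonneg.2 (Real.rpow_le_rpow hb hab (by linarith))
  have hcross : (t - s) * (p * (a - b) * b ^ (p - 1)) ≤ |s - t| * (a ^ p - b ^ p) := by
    rw [abs_sub_comm]
    exact mul_le_mul (le_abs_self _) (mul_sub_mul_rpow_sub_one_le hb hab hp)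
      (mul_nonneg (by positivity) (Real.rpow_nonneg hb _)) (abs_nonneg _)
  have hsplit : p * ((a - b) * (b ^ (p - 1) * t - a ^ (p - 1) * s))
      = (t - s) * (p * (a - b) * b ^ (p - 1)) - p * (s * ((a - b) * (a ^ (p - 1) - b ^ (p - 1))))
      := by ring
  rw [hsplit]
  linarith [mul_nonneg (abs_nonneg (s - t)) (Real.rpow_nonneg hb p)]

theorem one_sub_mul_sub_one_le_rpow_neg {x β : ℝ} (hx : 0 < x) (hβ : 0 ≤ β) :
    1 - β * (x - 1) ≤ x ^ (-β) := by
  rw [Real.rpow_def_of_pos hx]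
  have := mul_le_mul_of_nonneg_left (Real.log_le_sub_one_of_pos hx) hβ
  linarith [Real.add_one_le_exp (Real.log x * -β)]

theorem rpow_neg_sub_rpow_neg_le {a b β : ℝ} (ha : 0 < a) (hb : 0 < b) (hβ : 0 ≤ β) :
    a ^ (-β) - b ^ (-β) ≤ β * a ^ (-(β + 1)) * (b - a) := by
  have key := mul_le_mul_of_nonneg_left
    (one_sub_mul_sub_one_le_rpow_neg (div_pos hb ha) hβ) (Real.rpow_nonneg ha.le (-β))
  rw [Real.div_rpow hb.le ha.le, mul_div_cancel₀ _ (Real.rpow_pos_of_pos ha _).ne'] at key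
  rw [neg_add', Real.rpow_sub_one ha.ne']
  have : a ^ (-β) * (1 - β * (b / a - 1)) = a ^ (-β) - β * (a ^ (-β) / a) * (b - a) := by
    field_simp
  linarith

theorem abs_rpow_neg_sub_rpow_neg_le {a b c β : ℝ} (hc : 0 < c) (hca : c ≤ a) (hcb : c ≤ b)
    (hβ : 0 ≤ β) : |b ^ (-β) - a ^ (-β)| ≤ β * c ^ (-(β + 1)) * |b - a| := by
  wlog hab : a ≤ b generalizing a b
  · rw [abs_sub_comm, abs_sub_comm b]
    exact this hcb hca (le_of_not_ge hab)
  have ha : 0 < a := hc.trans_le hca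
  rw [abs_sub_comm, abs_of_nonneg (sub_nonneg.2 (Real.rpow_le_rpow_of_nonpos ha hab
    (neg_nonpos.2 hβ))), abs_of_nonneg (sub_nonneg.2 hab)]
  refine (rpow_neg_sub_rpow_neg_le ha (ha.trans_le hab) hβ).trans ?_
  exact mul_le_mul_of_nonneg_right (mul_le_mul_of_nonneg_left
    (Real.rpow_le_rpow_of_nonpos hc hca (by linarith)) hβ) (sub_nonneg.2 hab)

theorem rpow_neg_sub_le {s k t α β : ℝ} (hs : 0 ≤ s) (hsk : s < k) (hkt : k ≤ t) (ht : 1 ≤ t)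
    (hα : α ≤ 1) (hβ : 0 ≤ β) :
    (t - s) ^ (-(β + 1)) ≤ (k / (k - s)) ^ (β + 1) * t ^ (-(α + β)) := by
  have ht0 : 0 < t := by linarith
  have hts : 0 < t - s := by linarith
  have hratio : t / (t - s) ≤ k / (k - s) := by
    rw [div_le_div_iff₀ hts (by linarith)]
    nlinarith
  calc (t - s) ^ (-(β + 1)) = (t / (t - s)) ^ (β + 1) * t ^ (-(β + 1)) := by
        rw [Real.div_rpow ht0.le hts.le, Real.rpow_neg ht0.le, Real.rpow_neg hts.le]
        field_simp
    _ ≤ (k / (k - s)) ^ (β + 1) * t ^ (-(α + β)) :=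
        mul_le_mul (Real.rpow_le_rpow (div_nonneg ht0.le hts.le) hratio (by linarith))
          (Real.rpow_le_rpow_of_exponent_le ht (by linarith)) (Real.rpow_nonneg ht0.le _)
          (Real.rpow_nonneg (div_nonneg (by linarith) hts.le |>.trans hratio) _)

noncomputable def cutoff (R t : ℝ) : ℝ := max 0 (1 - t / R)

theorem cutoff_nonneg (R t : ℝ) : 0 ≤ cutoff R t := le_max_left _ _

theorem cutoff_le_one {R t : ℝ} (hR : 0 < R) (ht : 0 ≤ t) : cutoff R t ≤ 1 :=
  max_le zero_le_one (by linarith [div_nonneg ht hR.le])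

theorem cutoff_eq_zero {R t : ℝ} (hR : 0 < R) (h : R ≤ t) : cutoff R t = 0 :=
  max_eq_left <| by rw [sub_nonpos, le_div_iff₀ hR, one_mul]; exact h

theorem abs_cutoff_sub_le {R : ℝ} (hR : 0 < R) (a b : ℝ) :
    |cutoff R b - cutoff R a| ≤ |b - a| / R := by
  rw [cutoff, cutoff, max_comm 0, max_comm 0]
  refine (abs_max_sub_max_le_abs _ _ _).trans_eq ?_
  rw [sub_sub_sub_cancel_left, ← sub_div, abs_div, abs_of_pos hR, abs_sub_comm]

theorem tendsto_cutoff (t : ℝ) : Tendsto (fun R => cutoff R t) atTop (𝓝 1) := by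
  simpa [cutoff] using (tendsto_const_nhds (x := (0 : ℝ))).max
    ((tendsto_const_nhds (x := (1 : ℝ))).sub (tendsto_const_nhds (x := t) |>.div_atTop tendsto_id))

theorem tendsto_tsum_mul_cutoff {ι : Type*} {f r : ι → ℝ} (hf : Summable f) (hf0 : ∀ x, 0 ≤ f x)
    (hr : ∀ x, 0 ≤ r x) :
    Tendsto (fun R => ∑' x, f x * cutoff R (r x)) atTop (𝓝 (∑' x, f x)) := by
  refine tendsto_tsum_of_dominated_convergence hf
    (fun x => by simpa using (tendsto_cutoff (r x)).const_mul (f x)) ?_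
  filter_upwards [eventually_gt_atTop 0] with R hR x
  rw [Real.norm_eq_abs, abs_mul, abs_of_nonneg (hf0 x), abs_of_nonneg (cutoff_nonneg _ _)]
  exact mul_le_of_le_one_right (hf0 x) (cutoff_le_one hR (hr x))

theorem eq_zero_of_mul_tsum_mul_cutoff_le {ι : Type*} {f r : ι → ℝ} {c θ A : ℝ}
    (hf : Summable f) (hf0 : ∀ x, 0 ≤ f x) (hr : ∀ x, 0 ≤ r x) (hθ : θ < c)
    (h : ∀ R > 0, c * ∑' x, f x * cutoff R (r x) ≤ θ * ∑' x, f x + A / R) (x : ι) : f x = 0 := by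
  have hlim : c * ∑' x, f x ≤ θ * ∑' x, f x := by
    refine le_of_tendsto_of_tendsto ((tendsto_tsum_mul_cutoff hf hf0 hr).const_mul c) ?_
      ((eventually_gt_atTop 0).mono h)
    simpa using (tendsto_const_nhds (x := θ * ∑' x, f x)).add
      ((tendsto_const_nhds (x := A)).div_atTop tendsto_id)
  have hsum0 : 0 ≤ ∑' x, f x := tsum_nonneg hf0
  have hsum : ∑' x, f x = 0 := by nlinarith
  exact le_antisymm (hsum ▸ hf.le_tsum x fun y _ => hf0 y) (hf0 x)

theorem abs_rpow_neg_mul_cutoff_sub_le {a b s β R δ : ℝ} (hs : s < a) (hba : |b - a| ≤ δ)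
    (hδ : δ ≤ s) (hβ : 0 ≤ β) (hR : 0 < R) :
    |b ^ (-β) * cutoff R b - a ^ (-β) * cutoff R a|
      ≤ (β * (a - s) ^ (-(β + 1)) + a ^ (-β) / R) * δ := by
  have hδ0 : 0 ≤ δ := (abs_nonneg _).trans hba
  have hsa : 0 < a - s := by linarith
  have hb : a - s ≤ b := by linarith [neg_abs_le (b - a)]
  have ha : 0 ≤ a ^ (-β) := Real.rpow_nonneg (by linarith) _
  have hsplit : b ^ (-β) * cutoff R b - a ^ (-β) * cutoff R a
      = (b ^ (-β) - a ^ (-β)) * cutoff R b + a ^ (-β) * (cutoff R b - cutoff R a) := by ring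
  calc _ ≤ |b ^ (-β) - a ^ (-β)| * cutoff R b + a ^ (-β) * |cutoff R b - cutoff R a| := by
        rw [hsplit]
        refine (abs_add_le _ _).trans_eq ?_
        rw [abs_mul, abs_mul, abs_of_nonneg (cutoff_nonneg R b), abs_of_nonneg ha]
    _ ≤ β * (a - s) ^ (-(β + 1)) * δ * 1 + a ^ (-β) * (δ / R) := by
        have hg := (abs_rpow_neg_sub_rpow_neg_le hsa (by linarith) hb hβ).trans
          (mul_le_mul_of_nonneg_left hba (by positivity))
        have hη := (abs_cutoff_sub_le hR a b).trans (div_le_div_of_nonneg_right hba hR.le)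
        have : 0 ≤ β * (a - s) ^ (-(β + 1)) * δ := by positivity
        gcongr
        exacts [cutoff_nonneg R b, cutoff_le_one hR (hsa.le.trans hb)]
    _ = _ := by ring

theorem sign_mul_sum_le_sum_abs {ι : Type*} (S : Finset ι) {a : ι → ℝ} (ha : ∀ y, 0 ≤ a y)
    (u : ι → ℝ) (u₀ : ℝ) :
    SignType.sign u₀ * ∑ y ∈ S, a y * (u y - u₀) ≤ ∑ y ∈ S, a y * (|u y| - |u₀|) := by
  rw [mul_sum]
  refine sum_le_sum fun y _ => ?_
  have hsign : (SignType.sign u₀ : ℝ) * u y ≤ |u y| := by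
    refine (le_abs_self _).trans ?_
    rw [abs_mul]
    exact mul_le_of_le_one_left (abs_nonneg _) (by
      rcases lt_trichotomy u₀ 0 with h | h | h <;> simp [h])
  calc (SignType.sign u₀ : ℝ) * (a y * (u y - u₀)) = a y * (SignType.sign u₀ * u y - |u₀|) := by
        rw [← sign_mul_self u₀]; ring
    _ ≤ a y * (|u y| - |u₀|) := mul_le_mul_of_nonneg_left (by linarith) (ha y)

theorem sum_sum_mul_swap_of_symm {ι : Type*} (T : Finset ι) {ω : ι → ι → ℝ}
    (hω : ∀ x y, ω x y = ω y x) (F : ι → ι → ℝ) :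
    ∑ x ∈ T, ∑ y ∈ T, ω x y * F y x = ∑ x ∈ T, ∑ y ∈ T, ω x y * F x y := by
  rw [sum_comm]
  simp only [hω]

theorem discrete_green_formula {ι : Type*} (T : Finset ι) {ω : ι → ι → ℝ}
    (hω : ∀ x y, ω x y = ω y x) (v φ : ι → ℝ) :
    ∑ x ∈ T, φ x * ∑ y ∈ T, ω x y * (v y - v x)
      = -(1 / 2) * ∑ x ∈ T, ∑ y ∈ T, ω x y * ((v y - v x) * (φ y - φ x)) := by
  have hswap := sum_sum_mul_swap_of_symm T hω fun a b => (v b - v a) * φ a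
  have hsplit : ∑ x ∈ T, ∑ y ∈ T, ω x y * ((v y - v x) * (φ y - φ x))
      = -∑ x ∈ T, ∑ y ∈ T, ω x y * ((v x - v y) * φ y)
        - ∑ x ∈ T, ∑ y ∈ T, ω x y * ((v y - v x) * φ x) := by
    simp only [← sum_neg_distrib, ← sum_sub_distrib]
    exact sum_congr rfl fun x _ => sum_congr rfl fun y _ => by ring
  have hlhs : ∑ x ∈ T, φ x * ∑ y ∈ T, ω x y * (v y - v x)
      = ∑ x ∈ T, ∑ y ∈ T, ω x y * ((v y - v x) * φ x) := by
    simp only [mul_sum]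
    exact sum_congr rfl fun x _ => sum_congr rfl fun y _ => by ring
  rw [hsplit, hswap, hlhs]
  ring

/-- Caccioppoli inequality for the test function `v ^ (p - 1) * ψ`. -/
theorem sum_rpow_mul_sum_sub_le {ι : Type*} (T : Finset ι) {ω : ι → ι → ℝ}
    (hω_nonneg : ∀ x y, 0 ≤ ω x y) (hω_symm : ∀ x y, ω x y = ω y x) {v ψ : ι → ℝ}
    (hv : ∀ x, 0 ≤ v x) (hψ : ∀ x, 0 ≤ ψ x) {p : ℝ} (hp : 1 ≤ p) :
    ∑ x ∈ T, v x ^ (p - 1) * ψ x * ∑ y ∈ T, ω x y * (v y - v x)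
      ≤ 1 / p * ∑ x ∈ T, v x ^ p * ∑ y ∈ T, ω x y * |ψ y - ψ x| := by
  have hp0 : 0 < p := by linarith
  have hedge : ∀ x y, -(ω x y * ((v y - v x) * (v y ^ (p - 1) * ψ y - v x ^ (p - 1) * ψ x)))
      ≤ ω x y / p * (|ψ y - ψ x| * (v y ^ p + v x ^ p)) := fun x y =>
    calc _ = ω x y / p * (p * ((v y - v x) * (v x ^ (p - 1) * ψ x - v y ^ (p - 1) * ψ y))) := by
          field_simp; ring
      _ ≤ _ := mul_le_mul_of_nonneg_left (mul_sub_mul_rpow_sub_le (hv y) (hv x) (hψ y) (hψ x) hp)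
          (div_nonneg (hω_nonneg x y) hp0.le)
  have hsymm : ∑ x ∈ T, ∑ y ∈ T, ω x y * (|ψ y - ψ x| * v y ^ p)
      = ∑ x ∈ T, ∑ y ∈ T, ω x y * (|ψ y - ψ x| * v x ^ p) := by
    rw [sum_sum_mul_swap_of_symm T hω_symm fun a b => |ψ a - ψ b| * v a ^ p]
    exact sum_congr rfl fun x _ => sum_congr rfl fun y _ => by rw [abs_sub_comm]
  have hrhs : ∑ x ∈ T, v x ^ p * ∑ y ∈ T, ω x y * |ψ y - ψ x|
      = ∑ x ∈ T, ∑ y ∈ T, ω x y * (|ψ y - ψ x| * v x ^ p) := by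
    simp only [mul_sum]
    exact sum_congr rfl fun x _ => sum_congr rfl fun y _ => by ring
  calc _ = 1 / 2 * ∑ x ∈ T, ∑ y ∈ T,
        -(ω x y * ((v y - v x) * (v y ^ (p - 1) * ψ y - v x ^ (p - 1) * ψ x))) := by
        rw [discrete_green_formula T hω_symm v fun x => v x ^ (p - 1) * ψ x, neg_mul, ← mul_neg,
          ← sum_neg_distrib]
        simp only [← sum_neg_distrib]
    _ ≤ 1 / 2 * ∑ x ∈ T, ∑ y ∈ T, ω x y / p * (|ψ y - ψ x| * (v y ^ p + v x ^ p)) := by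
        gcongr with x _ y _
        exact hedge x y
    _ = 1 / (2 * p) * (∑ x ∈ T, ∑ y ∈ T, ω x y * (|ψ y - ψ x| * v y ^ p)
          + ∑ x ∈ T, ∑ y ∈ T, ω x y * (|ψ y - ψ x| * v x ^ p)) := by
        simp only [← sum_add_distrib, mul_sum]
        exact sum_congr rfl fun x _ => sum_congr rfl fun y _ => by field_simp
    _ = _ := by
        rw [hsymm, hrhs]
        field_simp
        ring

theorem nonneg_of_jump_le {G : Type*} [Nontrivial G] {ω d : G → G → ℝ} {s : ℝ}
    (hconn : ∀ x y : G, Relation.ReflTransGen (fun a b => 0 < ω a b) x y)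
    (hd_nonneg : ∀ x y, 0 ≤ d x y) (hjump : ∀ x y, 0 < ω x y → d x y ≤ s) : 0 ≤ s := by
  obtain ⟨x, y, hxy⟩ := exists_pair_ne G
  rcases (hconn x y).cases_head with rfl | ⟨z, hz, -⟩
  · exact absurd rfl hxy
  · exact (hd_nonneg x z).trans (hjump x z hz)

/-- Kato's inequality `Δ|u| ≥ sign u · Δu`, for a solution of `Δu = Vu`. -/
theorem mul_abs_le_sum_of_graphLap_eq {G : Type*} {μ : G → ℝ} {ω : G → G → ℝ} {u V : G → ℝ}
    {x : G} (hμ : 0 < μ x) (hω : ∀ y, 0 ≤ ω x y) {T : Finset G} (hT : ∀ y, ω x y ≠ 0 → y ∈ T)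
    (hu : graphLap μ ω u x = V x * u x) :
    μ x * (V x * |u x|) ≤ ∑ y ∈ T, ω x y * (|u y| - |u x|) := by
  have hsum : μ x * (V x * u x) = ∑ y ∈ T, ω x y * (u y - u x) := by
    rw [← hu, graphLap, ← mul_assoc, mul_inv_cancel₀ hμ.ne', one_mul]
    exact tsum_eq_sum fun y hy => by rw [not_imp_comm.1 (hT y) hy, zero_mul]
  calc μ x * (V x * |u x|) = SignType.sign (u x) * (μ x * (V x * u x)) := by
        rw [← sign_mul_self (u x)]; ring
    _ ≤ _ := hsum ▸ sign_mul_sum_le_sum_abs T hω u (u x)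

theorem abs_sub_le_of_triangle {G : Type*} {d : G → G → ℝ} (hd_symm : ∀ x y, d x y = d y x)
    (hd_tri : ∀ x y z, d x y ≤ d x z + d z y) (x₀ x y : G) : |d y x₀ - d x x₀| ≤ d x y :=
  abs_sub_le_iff.2 ⟨by linarith [hd_tri y x₀ x, hd_symm x y], by linarith [hd_tri x x₀ y]⟩

theorem summable_mul_rpow_neg_mul_of_le {G : Type*} {a b r μ : G → ℝ} {β γ : ℝ}
    (hf : Summable fun x => a x * b x ^ (-β) * μ x) (ha : ∀ x, 0 ≤ a x) (hμ : ∀ x, 0 ≤ μ x)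
    (hb : ∀ x, 0 < b x) (hbr : ∀ x, b x ≤ r x) (hr : ∀ x, 1 ≤ r x) (hβ : 0 ≤ β) (hβγ : β ≤ γ) :
    Summable fun x => a x * r x ^ (-γ) * μ x := by
  refine hf.of_nonneg_of_le (fun x => mul_nonneg (mul_nonneg (ha x)
    (Real.rpow_nonneg (by linarith [hr x]) _)) (hμ x)) fun x => ?_
  refine mul_le_mul_of_nonneg_right (mul_le_mul_of_nonneg_left ?_ (ha x)) (hμ x)
  exact (Real.rpow_le_rpow_of_exponent_le (hr x) (by linarith)).trans
    (Real.rpow_le_rpow_of_nonpos (hb x) (hbr x) (by linarith))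

theorem sum_mul_abs_rpow_neg_mul_cutoff_sub_le {G : Type*} {μ : G → ℝ} {ω d : G → G → ℝ}
    {r : G → ℝ} {s C₀ β R : ℝ} (hω_nonneg : ∀ x y, 0 ≤ ω x y)
    (hloc : ∀ x, {y | ω x y ≠ 0}.Finite) (hd_nonneg : ∀ x y, 0 ≤ d x y)
    (h1intr : ∀ x, ∑' y, ω x y * d x y ≤ C₀ * μ x) (hjump : ∀ x y, 0 < ω x y → d x y ≤ s)
    (hr_lip : ∀ x y, |r y - r x| ≤ d x y) (hs : 0 ≤ s) (hsr : ∀ x, s < r x) (hβ : 0 ≤ β)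
    (hR : 0 < R) (x : G) (T : Finset G) :
    ∑ y ∈ T, ω x y * |r y ^ (-β) * cutoff R (r y) - r x ^ (-β) * cutoff R (r x)|
      ≤ (β * (r x - s) ^ (-(β + 1)) + r x ^ (-β) / R) * (C₀ * μ x) := by
  set coef := β * (r x - s) ^ (-(β + 1)) + r x ^ (-β) / R
  have hcoef : 0 ≤ coef := by
    have := sub_pos.2 (hsr x)
    have : 0 < r x := by linarith
    positivity
  have hsum : Summable fun y => ω x y * d x y :=
    summable_of_hasFiniteSupport <| (hloc x).subset fun y hy h => hy (by simp [h])
  calc _ ≤ ∑ y ∈ T, coef * (ω x y * d x y) := sum_le_sum fun y _ => by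
        rcases (hω_nonneg x y).eq_or_lt with h | h
        · simp [← h]
        · rw [mul_left_comm]
          exact mul_le_mul_of_nonneg_left (abs_rpow_neg_mul_cutoff_sub_le (hsr x) (hr_lip x y)
            (hjump x y h) hβ hR) h.le
    _ = coef * ∑ y ∈ T, ω x y * d x y := (mul_sum _ _ _).symm
    _ ≤ coef * (C₀ * μ x) := mul_le_mul_of_nonneg_left
        ((hsum.sum_le_tsum T fun y _ => mul_nonneg (hω_nonneg x y) (hd_nonneg x y)).trans
          (h1intr x)) hcoef

theorem mul_tsum_le_sum_rpow_mul_sum_sub {G : Type*} {μ : G → ℝ} {ω : G → G → ℝ}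
    {V v r η : G → ℝ} {c₀ α β p : ℝ} {B T : Finset G} (hμ : ∀ x, 0 < μ x) (hr0 : ∀ x, 0 < r x)
    (hp : 1 ≤ p) (hV : ∀ x, c₀ * r x ^ (-α) ≤ V x) (hv : ∀ x, 0 ≤ v x) (hη : ∀ x, 0 ≤ η x)
    (hη_out : ∀ x ∉ B, η x = 0) (hBT : B ⊆ T) (hnbhd : ∀ x ∈ B, ∀ y, ω x y ≠ 0 → y ∈ T)
    (hsub : ∀ x (T : Finset G), (∀ y, ω x y ≠ 0 → y ∈ T) →
      μ x * (V x * v x) ≤ ∑ y ∈ T, ω x y * (v y - v x)) :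
    c₀ * ∑' x, v x ^ p * r x ^ (-(α + β)) * μ x * η x
      ≤ ∑ x ∈ T, v x ^ (p - 1) * (r x ^ (-β) * η x) * ∑ y ∈ T, ω x y * (v y - v x) := by
  rw [tsum_eq_sum (s := T) fun x hx => by rw [hη_out x fun h => hx (hBT h), mul_zero], mul_sum]
  refine sum_le_sum fun x _ => ?_
  by_cases hx : x ∈ B
  · have hφ : 0 ≤ v x ^ (p - 1) * (r x ^ (-β) * η x) :=
      mul_nonneg (Real.rpow_nonneg (hv x) _) (mul_nonneg (Real.rpow_nonneg (hr0 x).le _) (hη x))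
    calc c₀ * (v x ^ p * r x ^ (-(α + β)) * μ x * η x)
        = c₀ * r x ^ (-α) * (v x ^ (p - 1) * (r x ^ (-β) * η x) * (μ x * v x)) := by
          rw [← rpow_sub_one_mul_self (hv x) hp, neg_add, Real.rpow_add (hr0 x)]; ring
      _ ≤ V x * (v x ^ (p - 1) * (r x ^ (-β) * η x) * (μ x * v x)) :=
          mul_le_mul_of_nonneg_right (hV x) (mul_nonneg hφ (mul_nonneg (hμ x).le (hv x)))
      _ = v x ^ (p - 1) * (r x ^ (-β) * η x) * (μ x * (V x * v x)) := by ring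
      _ ≤ _ := mul_le_mul_of_nonneg_left (hsub x T (hnbhd x hx)) hφ
  · simp [hη_out x hx]

theorem mul_tsum_mul_cutoff_le {G : Type*} {μ : G → ℝ} {ω d : G → G → ℝ} {V v r : G → ℝ}
    {s k C₀ c₀ α β p R : ℝ}
    (hμ : ∀ x, 0 < μ x) (hω_nonneg : ∀ x y, 0 ≤ ω x y) (hω_symm : ∀ x y, ω x y = ω y x)
    (hloc : ∀ x, {y | ω x y ≠ 0}.Finite) (hd_nonneg : ∀ x y, 0 ≤ d x y)
    (h1intr : ∀ x, ∑' y, ω x y * d x y ≤ C₀ * μ x) (hjump : ∀ x y, 0 < ω x y → d x y ≤ s)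
    (hr_lip : ∀ x y, |r y - r x| ≤ d x y) (hr_fin : ∀ R, {x | r x < R}.Finite)
    (hs : 0 ≤ s) (hsk : s < k) (hkr : ∀ x, k ≤ r x) (hr1 : ∀ x, 1 ≤ r x)
    (hC₀ : 0 ≤ C₀) (hα : α ≤ 1) (hβ : 0 ≤ β) (hp : 1 ≤ p) (hR : 0 < R)
    (hV : ∀ x, c₀ * r x ^ (-α) ≤ V x) (hv : ∀ x, 0 ≤ v x)
    (hsub : ∀ x (T : Finset G), (∀ y, ω x y ≠ 0 → y ∈ T) →
      μ x * (V x * v x) ≤ ∑ y ∈ T, ω x y * (v y - v x))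
    (hw : Summable fun x => v x ^ p * r x ^ (-(α + β)) * μ x)
    (hg : Summable fun x => v x ^ p * r x ^ (-β) * μ x) :
    c₀ * ∑' x, v x ^ p * r x ^ (-(α + β)) * μ x * cutoff R (r x)
      ≤ β * C₀ * (k / (k - s)) ^ (β + 1) / p * ∑' x, v x ^ p * r x ^ (-(α + β)) * μ x
        + C₀ / p * (∑' x, v x ^ p * r x ^ (-β) * μ x) / R := by
  classical
  set K := (k / (k - s)) ^ (β + 1)
  set ψ : G → ℝ := fun x => r x ^ (-β) * cutoff R (r x)
  set B := (hr_fin R).toFinset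
  -- the support of the cutoff together with its neighbours
  set T := B ∪ B.biUnion fun x => (hloc x).toFinset
  have hr0 : ∀ x, 0 < r x := fun x => by linarith [hr1 x]
  have hvr : ∀ x (γ : ℝ), 0 ≤ v x ^ p * r x ^ γ := fun x γ =>
    mul_nonneg (Real.rpow_nonneg (hv x) p) (Real.rpow_nonneg (hr0 x).le γ)
  have hψ : ∀ x, 0 ≤ ψ x := fun x =>
    mul_nonneg (Real.rpow_nonneg (hr0 x).le _) (cutoff_nonneg _ _)
  have hcutoff_out : ∀ x ∉ B, cutoff R (r x) = 0 := fun x hx =>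
    cutoff_eq_zero hR (by simpa [B] using hx)
  have hnbhd : ∀ x ∈ B, ∀ y, ω x y ≠ 0 → y ∈ T := fun x hx y hy =>
    mem_union_right _ (mem_biUnion.2 ⟨x, hx, (hloc x).mem_toFinset.2 hy⟩)
  have hgrad : ∀ x, ∑ y ∈ T, ω x y * |ψ y - ψ x|
      ≤ (β * K * r x ^ (-(α + β)) + r x ^ (-β) / R) * (C₀ * μ x) := fun x => by
    refine (sum_mul_abs_rpow_neg_mul_cutoff_sub_le hω_nonneg hloc hd_nonneg h1intr hjump hr_lip
      hs (fun x => hsk.trans_le (hkr x)) hβ hR x T).trans ?_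
    refine mul_le_mul_of_nonneg_right ?_ (mul_nonneg hC₀ (hμ x).le)
    rw [mul_assoc]
    gcongr
    exact rpow_neg_sub_le hs hsk (hkr x) (hr1 x) hα hβ
  have hK : 0 ≤ K := Real.rpow_nonneg (div_nonneg (by linarith) (by linarith)) _
  have hp0 : 0 < p := by linarith
  calc _ ≤ _ := mul_tsum_le_sum_rpow_mul_sum_sub hμ hr0 hp hV hv (fun x => cutoff_nonneg R (r x))
        hcutoff_out subset_union_left hnbhd hsub
    _ ≤ 1 / p * ∑ x ∈ T, v x ^ p * ∑ y ∈ T, ω x y * |ψ y - ψ x| :=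
        sum_rpow_mul_sum_sub_le T hω_nonneg hω_symm hv hψ hp
    _ ≤ 1 / p * ∑ x ∈ T, v x ^ p *
          ((β * K * r x ^ (-(α + β)) + r x ^ (-β) / R) * (C₀ * μ x)) := by
        gcongr with x
        exacts [Real.rpow_nonneg (hv x) p, hgrad x]
    _ = β * C₀ * K / p * ∑ x ∈ T, v x ^ p * r x ^ (-(α + β)) * μ x
          + C₀ / p * (∑ x ∈ T, v x ^ p * r x ^ (-β) * μ x) / R := by
        simp only [mul_sum, sum_div, ← sum_add_distrib]
        exact sum_congr rfl fun x _ => by field_simp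
    _ ≤ _ := by
        gcongr
        · exact hw.sum_le_tsum T fun x _ => mul_nonneg (hvr x _) (hμ x).le
        · exact hg.sum_le_tsum T fun x _ => mul_nonneg (hvr x _) (hμ x).le

theorem uniqueness_p_ge_one_general {G : Type*} [Infinite G] (μ : G → ℝ) (ω d : G → G → ℝ)
    (hμ : ∀ x, 0 < μ x) (hω_nonneg : ∀ x y, 0 ≤ ω x y)
    (hω_symm : ∀ x y, ω x y = ω y x)
    (hconn : ∀ x y : G, Relation.ReflTransGen (fun a b => 0 < ω a b) x y)
    (hloc : ∀ x, {y | ω x y ≠ 0}.Finite)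
    (hd_nonneg : ∀ x y, 0 ≤ d x y)
    (hd_symm : ∀ x y, d x y = d y x)
    (hd_tri : ∀ x y z, d x y ≤ d x z + d z y)
    (C₀ : ℝ) (hC₀ : 0 < C₀) (h1intr : ∀ x, ∑' y, ω x y * d x y ≤ C₀ * μ x)
    (s : ℝ) (hjump : ∀ x y, 0 < ω x y → d x y ≤ s)
    (hballs : ∀ (x : G) (r : ℝ), {y | d x y < r}.Finite)
    (x₀ : G) (V : G → ℝ) (c₀ k α : ℝ) (hc₀ : 0 < c₀) (hk : s < k)
    (hα0 : 0 < α) (hα : α ≤ 1)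
    (hV : ∀ x, V x ≥ c₀ * (d x x₀ + k) ^ (-α))
    (u : G → ℝ) (hu : ∀ x, graphLap μ ω u x = V x * u x)
    (β p : ℝ) (hβ : 0 < β) (hp1 : 1 ≤ p)
    (hp : p > C₀ / c₀ * (k ^ (β + 1) / (k - s) ^ (β + 1)) * β)
    (husum : Summable (fun x => |u x| ^ p * (d x x₀ + k) ^ (-β) * μ x)) :
    ∀ x, u x = 0 := by
  have hs : 0 ≤ s := nonneg_of_jump_le hconn hd_nonneg hjump
  set r : G → ℝ := fun x => d x x₀ + max k 1
  have hdk : ∀ x, 0 < d x x₀ + k := fun x => by linarith [hd_nonneg x x₀]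
  have hdkr : ∀ x, d x x₀ + k ≤ r x := fun x => by simp [r]
  have hkr : ∀ x, k ≤ r x := fun x => by linarith [hdkr x, hd_nonneg x x₀]
  have hr1 : ∀ x, 1 ≤ r x := fun x => by linarith [hd_nonneg x x₀, le_max_right k 1]
  have hr0 : ∀ x, 0 < r x := fun x => by linarith [hr1 x]
  have hr_lip : ∀ x y, |r y - r x| ≤ d x y := fun x y => by
    simpa [r] using abs_sub_le_of_triangle hd_symm hd_tri x₀ x y
  have hr_fin : ∀ R, {x | r x < R}.Finite := fun R =>
    (hballs x₀ (R - max k 1)).subset fun x hx => by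
      simp only [Set.mem_ofPred_eq, r] at hx ⊢; rw [hd_symm]; linarith
  have hV' : ∀ x, c₀ * r x ^ (-α) ≤ V x := fun x => (mul_le_mul_of_nonneg_left
    (Real.rpow_le_rpow_of_nonpos (hdk x) (hdkr x) (by linarith)) hc₀.le).trans (hV x)
  have hθ : β * C₀ * (k / (k - s)) ^ (β + 1) / p < c₀ := by
    rw [div_lt_iff₀ (by linarith), Real.div_rpow (by linarith) (by linarith)]
    calc β * C₀ * (k ^ (β + 1) / (k - s) ^ (β + 1))
        = c₀ * (C₀ / c₀ * (k ^ (β + 1) / (k - s) ^ (β + 1)) * β) := by field_simp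
      _ < c₀ * p := mul_lt_mul_of_pos_left hp hc₀
  have hsummable := fun γ (hγ : β ≤ γ) => summable_mul_rpow_neg_mul_of_le husum
    (fun x => Real.rpow_nonneg (abs_nonneg (u x)) p) (fun x => (hμ x).le) hdk hdkr hr1 hβ.le hγ
  have hzero := eq_zero_of_mul_tsum_mul_cutoff_le (hsummable _ (by linarith))
    (fun x => mul_nonneg (mul_nonneg (Real.rpow_nonneg (abs_nonneg (u x)) p)
      (Real.rpow_nonneg (hr0 x).le _)) (hμ x).le) (fun x => (hr0 x).le) hθ
    fun R hR => mul_tsum_mul_cutoff_le hμ hω_nonneg hω_symm hloc hd_nonneg h1intr hjump hr_lip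
      hr_fin hs hk hkr hr1 hC₀.le hα hβ.le hp1 hR hV' (fun x => abs_nonneg (u x))
      (fun x T hT => mul_abs_le_sum_of_graphLap_eq (hμ x) (hω_nonneg x) hT (hu x))
      (hsummable _ (by linarith)) (hsummable _ le_rfl)
  intro x
  have hx := hzero x
  rw [mul_assoc, mul_eq_zero, or_iff_left (mul_pos (Real.rpow_pos_of_pos (hr0 x) _) (hμ x)).ne',
    Real.rpow_eq_zero_iff_of_nonneg (abs_nonneg _)] at hx
  exact abs_eq_zero.1 hx.1

/-- Theorem 3.4: uniqueness in weighted `ℓ^p`, `p ≥ 1`, for the Schrödinger equation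
`Δu = Vu`, with `d` additionally 1-intrinsic with bound `C₀`. -/
theorem uniqueness_p_ge_one {G : Type*} [Infinite G] (μ : G → ℝ) (ω d : G → G → ℝ)
    (hμ : ∀ x, 0 < μ x) (hω_nonneg : ∀ x y, 0 ≤ ω x y)
    (hω_symm : ∀ x y, ω x y = ω y x) (hω_diag : ∀ x, ω x x = 0)
    (hω_sum : ∀ x, Summable (fun y => ω x y))
    (hconn : ∀ x y : G, Relation.ReflTransGen (fun a b => 0 < ω a b) x y)
    (hloc : ∀ x, {y | ω x y ≠ 0}.Finite)
    (hd_nonneg : ∀ x y, 0 ≤ d x y) (hd_self : ∀ x, d x x = 0)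
    (hd_symm : ∀ x y, d x y = d y x)
    (hd_tri : ∀ x y z, d x y ≤ d x z + d z y)
    (hintrinsic : ∀ x, ∑' y, ω x y * d x y ^ 2 ≤ μ x)
    (C₀ : ℝ) (hC₀ : 0 < C₀) (h1intr : ∀ x, ∑' y, ω x y * d x y ≤ C₀ * μ x)
    (s : ℝ) (hjump : ∀ x y, 0 < ω x y → d x y ≤ s)
    (hballs : ∀ (x : G) (r : ℝ), {y | d x y < r}.Finite)
    (x₀ : G) (V : G → ℝ) (c₀ k α : ℝ) (hc₀ : 0 < c₀) (hk : s < k)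
    (hα0 : 0 < α) (hα : α ≤ 1)
    (hV : ∀ x, V x ≥ c₀ * (d x x₀ + k) ^ (-α))
    (u : G → ℝ) (hu : ∀ x, graphLap μ ω u x = V x * u x)
    (β p : ℝ) (hβ : 0 < β) (hp1 : 1 ≤ p)
    (hp : p > C₀ / c₀ * (k ^ (β + 1) / (k - s) ^ (β + 1)) * β)
    (husum : Summable (fun x => |u x| ^ p * (d x x₀ + k) ^ (-β) * μ x)) :
    ∀ x, u x = 0 :=
  uniqueness_p_ge_one_general μ ω d hμ hω_nonneg hω_symm hconn hloc hd_nonneg hd_symm hd_tri C₀ hC₀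
    h1intr s hjump hballs x₀ V c₀ k α hc₀ hk hα0 hα hV u hu β p hβ hp1 hp husum
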